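/- arXiv:2502.05257 — 2 statements merged into one kernel-verified Lean document; each statement's English description precedes it below -/
import Mathlib

section
/- Let A be a commutative ring and I ⊆ A a finitely presented nilpotent ideal such that the quotient ring A/I is coherent. Then A is coherent. -/
/-!
Let `I ^ (n + 2) = 0` and `J = I ^ (n + 1)`. The image of `I` in `A ⧸ J` is finitely presented
(as `I ⊓ J = J` is finitely generated), its `(n + 1)`-st power vanishes and the quotient by it is
again `A ⧸ I`, so `A ⧸ J` is coherent by induction on `n`. Since `J * I = 0`, `I` is a finitely
presented `A ⧸ J`-module, hence every finitely generated submodule of `I` is finitely presented.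
This property ("pseudo-coherence") is stable under extensions, and both `I` and `A ⧸ I` have it as
`A`-modules, so `A` has it, which is coherence.
-/

/-- A commutative ring is *coherent* if every finitely generated ideal is
finitely presented as a module. -/
def IsCoherentRing (A : Type*) [CommRing A] : Prop :=
  ∀ I : Ideal A, I.FG → Module.FinitePresentation A I

open Function

section Restriction

variable {R M P : Type*} [Ring R] [AddCommGroup M] [Module R M] [AddCommGroup P] [Module R P]

theorem LinearMap.map_subtype_ker_submoduleMap (f : M →ₗ[R] P) (N : Submodule R M) :
    (LinearMap.ker (f.submoduleMap N)).map N.subtype = N ⊓ LinearMap.ker f := by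
  ext x
  simp only [Submodule.mem_map, LinearMap.mem_ker, Submodule.mem_inf]
  constructor
  · rintro ⟨y, hy, rfl⟩
    exact ⟨y.2, congr_arg Subtype.val hy⟩
  · rintro ⟨hxN, hx⟩
    exact ⟨⟨x, hxN⟩, Subtype.ext hx, rfl⟩

theorem Submodule.FG.inf_ker (f : M →ₗ[R] P) {N : Submodule R M} (hN : N.FG)
    [Module.FinitePresentation R (N.map f)] : (N ⊓ LinearMap.ker f).FG := by
  have : Module.Finite R N := .of_fg hN
  rw [← f.map_subtype_ker_submoduleMap N]
  exact (Module.FinitePresentation.fg_ker _ (f.submoduleMap_surjective N)).map _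

theorem Module.finitePresentation_map (f : M →ₗ[R] P) (N : Submodule R M)
    [Module.FinitePresentation R N]
    (h : (N ⊓ LinearMap.ker f).FG) : Module.FinitePresentation R (N.map f) := by
  refine Module.finitePresentation_of_surjective _ (f.submoduleMap_surjective N) ?_
  refine Submodule.fg_of_fg_map_injective _ N.injective_subtype ?_
  rwa [f.map_subtype_ker_submoduleMap N]

theorem Module.finitePresentation_of_map (f : M →ₗ[R] P) (N : Submodule R M)
    [Module.FinitePresentation R (N.map f)]
    [Module.FinitePresentation R ↥(N ⊓ LinearMap.ker f)] : Module.FinitePresentation R N := by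
  have : Module.FinitePresentation R (LinearMap.ker (f.submoduleMap N)) :=
    .of_equiv ((Submodule.equivMapOfInjective _ N.injective_subtype _).trans
      (LinearEquiv.ofEq _ _ (f.map_subtype_ker_submoduleMap N))).symm
  exact Module.finitePresentation_of_ker _ (f.submoduleMap_surjective N)

end Restriction

/-- Bourbaki's pseudo-coherence; a coherent module is in addition finitely generated. -/
def Module.IsPseudoCoherent (R M : Type*) [Ring R] [AddCommGroup M] [Module R M] : Prop :=
  ∀ N : Submodule R M, N.FG → Module.FinitePresentation R N

namespace Module.IsPseudoCoherent

variable {R M M' P : Type*} [Ring R] [AddCommGroup M] [Module R M] [AddCommGroup M'] [Module R M']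
  [AddCommGroup P] [Module R P]

theorem finitePresentation_of_le {p N : Submodule R M} (h : IsPseudoCoherent R p) (hN : N.FG)
    (hle : N ≤ p) : FinitePresentation R N := by
  have : FinitePresentation R (N.submoduleOf p) := by
    refine h _ (Submodule.fg_of_fg_map_injective _ p.injective_subtype ?_)
    rwa [Submodule.submoduleOf, Submodule.map_comap_subtype, inf_eq_right.mpr hle]
  exact .of_equiv (Submodule.submoduleOfEquivOfLe hle)

theorem of_subsingleton [Subsingleton M] : IsPseudoCoherent R M :=
  fun _ _ ↦ inferInstance

theorem of_equiv (e : M ≃ₗ[R] M') (h : IsPseudoCoherent R M) : IsPseudoCoherent R M' := by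
  intro N hN
  have : FinitePresentation R (N.map (e.symm : M' →ₗ[R] M)) := h _ (hN.map _)
  exact .of_equiv (e.symm.submoduleMap N).symm

theorem of_ker (f : M →ₗ[R] P) (hK : IsPseudoCoherent R (LinearMap.ker f))
    (hP : IsPseudoCoherent R P) : IsPseudoCoherent R M := by
  intro N hN
  have := hP _ (hN.map f)
  have := hK.finitePresentation_of_le (hN.inf_ker f) inf_le_right
  exact finitePresentation_of_map f N

theorem prod (hM : IsPseudoCoherent R M) (hM' : IsPseudoCoherent R M') :
    IsPseudoCoherent R (M × M') := by
  refine of_ker (LinearMap.fst R M M') (hM'.of_equiv ?_) hM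
  exact (LinearEquiv.ofInjective _ LinearMap.inr_injective).trans
    (LinearEquiv.ofEq _ _ (LinearMap.ker_fst R M M').symm)

theorem of_surjective (σ : M →ₗ[R] P) (hσ : Surjective σ) (hker : (LinearMap.ker σ).FG)
    (h : IsPseudoCoherent R M) : IsPseudoCoherent R P := by
  intro N hN
  have hle : LinearMap.ker σ ≤ N.comap σ := LinearMap.ker_le_comap σ
  have hmap : (N.comap σ).map σ = N := Submodule.map_comap_eq_of_surjective hσ N
  have : FinitePresentation R (N.comap σ) := by
    refine h _ (Submodule.fg_of_fg_map_of_fg_inf_ker σ ?_ ?_)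
    · rwa [hmap]
    · rwa [inf_eq_right.mpr hle]
  have := finitePresentation_map σ (N.comap σ) (by rwa [inf_eq_right.mpr hle])
  exact .of_equiv (LinearEquiv.ofEq _ _ hmap)

end Module.IsPseudoCoherent

namespace IsCoherentRing

variable {R M : Type*} [CommRing R] [AddCommGroup M] [Module R M]

theorem isPseudoCoherent_pi (h : IsCoherentRing R) (ι : Type*) [Finite ι] :
    Module.IsPseudoCoherent R (ι → R) :=
  Module.pi_induction' R (motive := fun N _ _ ↦ Module.IsPseudoCoherent R N)
    (motive' := fun N _ _ ↦ Module.IsPseudoCoherent R N)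
    (fun e hN ↦ hN.of_equiv e) (fun e hN ↦ hN.of_equiv e) .of_subsingleton
    (fun hN hN' ↦ hN.prod hN') (fun _ : ι ↦ R) (fun _ ↦ h)

theorem isPseudoCoherent_of_finitePresentation (h : IsCoherentRing R)
    [Module.FinitePresentation R M] : Module.IsPseudoCoherent R M := by
  obtain ⟨n, σ, hσ⟩ := Module.Finite.exists_fin' R M
  exact (h.isPseudoCoherent_pi (Fin n)).of_surjective σ hσ
    (Module.FinitePresentation.fg_ker σ hσ)

end IsCoherentRing

section ChangeOfRings

variable {A B M : Type*} [CommRing A] [CommRing B] [Algebra A B]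
  [AddCommGroup M] [Module A M] [Module B M] [IsScalarTower A B M]

theorem isBaseChange_id_of_surjective (hs : Surjective (algebraMap A B)) :
    IsBaseChange B (LinearMap.id : M →ₗ[A] M) :=
  IsBaseChange.of_lift_unique _ fun _ _ _ _ _ g ↦
    ⟨g.extendScalarsOfSurjective hs, rfl,
      fun _ hg' ↦ LinearMap.restrictScalars_injective A hg'⟩

theorem Module.FinitePresentation.of_surjective_algebraMap (hs : Surjective (algebraMap A B))
    [Module.FinitePresentation A M] :
    Module.FinitePresentation B M :=
  FinitePresentation.of_isBaseChange _ (isBaseChange_id_of_surjective hs)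

theorem Submodule.restrictScalars_span_of_surjective (hs : Surjective (algebraMap A B))
    (N : Submodule A M) :
    (Submodule.span B (N : Set M)).restrictScalars A = N := by
  rw [Submodule.restrictScalars_span A B hs, Submodule.span_eq]

theorem Module.IsPseudoCoherent.of_restrictScalars (hs : Surjective (algebraMap A B))
    (h : Module.IsPseudoCoherent A M) :
    Module.IsPseudoCoherent B M := by
  intro N hN
  have : Module.FinitePresentation A (N.restrictScalars A) :=
    h _ (hN.restrictScalars_of_surjective hs)
  have : Module.FinitePresentation A N :=
    .of_equiv ((N.restrictScalarsEquiv A B M).restrictScalars A)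
  exact .of_surjective_algebraMap hs

theorem Module.IsPseudoCoherent.restrictScalars (hs : Surjective (algebraMap A B))
    [Module.FinitePresentation A B]
    (h : Module.IsPseudoCoherent B M) : Module.IsPseudoCoherent A M := by
  intro N hN
  let N' := Submodule.span B (N : Set M)
  have hN' : N'.restrictScalars A = N := Submodule.restrictScalars_span_of_surjective hs N
  have : Module.FinitePresentation B N' := h _ (.of_restrictScalars A (hN' ▸ hN))
  have : Module.FinitePresentation A N' := .trans A N' B
  exact .of_equiv (((N'.restrictScalarsEquiv A B M).restrictScalars A).symm.trans
    (LinearEquiv.ofEq _ _ hN'))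

end ChangeOfRings

theorem Ideal.finitePresentation_quotient_of_fg {A : Type*} [CommRing A] {J : Ideal A} (hJ : J.FG) :
    Module.FinitePresentation A (A ⧸ J) :=
  Module.finitePresentation_of_surjective J.mkQ J.mkQ_surjective (by rwa [J.ker_mkQ])

theorem IsCoherentRing.of_surjective {A B : Type*} [CommRing A] [CommRing B] (f : A →+* B)
    (hf : Surjective f) (hker : (RingHom.ker f).FG) (h : IsCoherentRing A) :
    IsCoherentRing B := by
  let := f.toAlgebra
  exact (Module.IsPseudoCoherent.of_surjective (Algebra.linearMap A B) hf hker h).of_restrictScalars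
    hf

theorem IsCoherentRing.of_ringEquiv {A B : Type*} [CommRing A] [CommRing B] (e : A ≃+* B)
    (h : IsCoherentRing A) : IsCoherentRing B :=
  h.of_surjective (e : A →+* B) e.surjective
    (by rw [RingHom.ker_coe_equiv]; exact Submodule.fg_bot)

theorem Module.IsPseudoCoherent.of_isTorsionBySet {A M : Type*} [CommRing A] [AddCommGroup M]
    [Module A M] [Module.FinitePresentation A M] {J : Ideal A} (hJ : J.FG)
    (hcoh : IsCoherentRing (A ⧸ J)) (hM : Module.IsTorsionBySet A M J) :
    Module.IsPseudoCoherent A M := by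
  let := hM.module
  have hs : Surjective (algebraMap A (A ⧸ J)) := Ideal.Quotient.mk_surjective
  have := Ideal.finitePresentation_quotient_of_fg hJ
  have : Module.FinitePresentation (A ⧸ J) M := .of_surjective_algebraMap hs
  exact hcoh.isPseudoCoherent_of_finitePresentation.restrictScalars hs

theorem Ideal.finitePresentation_map_quotient {A : Type*} [CommRing A] {I J : Ideal A}
    [Module.FinitePresentation A I] (h : (I ⊓ J).FG) :
    Module.FinitePresentation (A ⧸ J) (I.map (Ideal.Quotient.mk J)) := by
  have hmap : (I.map (Ideal.Quotient.mk J)).restrictScalars A = Submodule.map J.mkQ I := by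
    ext x
    simp [Ideal.mem_map_iff_of_surjective _ Ideal.Quotient.mk_surjective]
  have := Module.finitePresentation_map J.mkQ I (by rwa [J.ker_mkQ])
  have : Module.FinitePresentation A (I.map (Ideal.Quotient.mk J)) :=
    .of_equiv ((LinearEquiv.ofEq _ _ hmap).symm.trans
      ((Submodule.restrictScalarsEquiv A _ _ _).restrictScalars A))
  exact .of_surjective_algebraMap Ideal.Quotient.mk_surjective

theorem IsCoherentRing.of_mul_eq_bot {A : Type*} [CommRing A] {I J : Ideal A}
    [Module.FinitePresentation A I] (hJ : J.FG) (hJI : J * I = ⊥)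
    (hJc : IsCoherentRing (A ⧸ J)) (hIc : IsCoherentRing (A ⧸ I)) : IsCoherentRing A := by
  have hI : Module.IsPseudoCoherent A I := .of_isTorsionBySet hJ hJc fun x a ↦
    Subtype.ext <| (Submodule.mem_bot A).mp (hJI ▸ Ideal.mul_mem_mul a.2 x.2)
  have := Ideal.finitePresentation_quotient_of_fg ((Module.Finite.iff_fg (N := I)).mp inferInstance)
  have hQ : Module.IsPseudoCoherent A (A ⧸ I) :=
    Module.IsPseudoCoherent.restrictScalars Ideal.Quotient.mk_surjective hIc
  exact Module.IsPseudoCoherent.of_ker I.mkQ (hI.of_equiv (LinearEquiv.ofEq _ _ I.ker_mkQ.symm))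
    hQ

theorem IsCoherentRing.of_pow_succ_eq_bot (n : ℕ) {A : Type*} [CommRing A] (I : Ideal A)
    [Module.FinitePresentation A I] (hI : I ^ (n + 1) = ⊥) (hIc : IsCoherentRing (A ⧸ I)) :
    IsCoherentRing A := by
  induction n generalizing A with
  | zero =>
    obtain rfl : I = ⊥ := by simpa using hI
    exact hIc.of_ringEquiv (RingEquiv.quotientBot A)
  | succ n ih =>
    have hIfg : I.FG := (Module.Finite.iff_fg (N := I)).mp inferInstance
    have hJI : I ^ (n + 1) ≤ I := Ideal.pow_le_self n.succ_ne_zero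
    have hJfg : (I ^ (n + 1)).FG := hIfg.pow
    refine of_mul_eq_bot hJfg (by rwa [← pow_succ]) ?_ hIc
    have := Ideal.finitePresentation_map_quotient (I := I) (by rwa [inf_eq_right.mpr hJI])
    refine ih (I.map (Ideal.Quotient.mk _)) (by rw [← Ideal.map_pow, Ideal.map_quotient_self]) ?_
    exact hIc.of_ringEquiv ((Ideal.quotEquivOfEq (sup_eq_right.mpr hJI)).symm.trans
      (DoubleQuot.quotQuotEquivQuotSup _ I).symm)

/-- If `I ⊆ A` is a finitely presented nilpotent ideal such that `A/I` is coherent,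
then `A` is coherent. -/
theorem coherent_of_nilpotent_extension {A : Type*} [CommRing A] (I : Ideal A)
    (hfp : Module.FinitePresentation A I)
    (hnil : IsNilpotent I)
    (hcoh : IsCoherentRing (A ⧸ I)) :
    IsCoherentRing A := by
  obtain ⟨n, hn⟩ := hnil
  exact IsCoherentRing.of_pow_succ_eq_bot n I (by rw [pow_succ, hn, zero_mul]; rfl) hcoh
end

section
/- Let A be a non-negatively graded commutative ring with degree-zero part A⁰ and augmentation ideal A₊, and let M be a non-negatively graded A-module. If the A⁰-module M/(A₊·M) is finitely generated, then M is finitely generated as an A-module. -/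
/-!
Let `N` be the span of finitely many homogeneous elements of `M` whose images generate
`M/(A₊·M)`, so that `N + A₊·M = M`. Since `N` is homogeneous, an element `m` of degree `n`
can be written `m = y + z` with `y ∈ N` of degree `n` and `z` the degree-`n` part of an element
of `A₊·M`. Because `A₊` strictly raises degrees, `z` lies in the submodule generated by the
components of degree `< n`, which are in `N` by strong induction on `n`. Hence `N = M`.
-/

open DirectSum HomogeneousIdeal

namespace Submodule

theorem exists_finset_subset_span_sup_eq_top {R M : Type*} [Ring R] [AddCommGroup M] [Module R M]
    {P : Submodule R M} [Module.Finite R (M ⧸ P)] {s : Set M} (hs : span R s = ⊤) :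
    ∃ t : Finset M, ↑t ⊆ s ∧ span R (t : Set M) ⊔ P = ⊤ := by
  classical
  obtain ⟨u, hu⟩ := Module.Finite.fg_top (R := R) (M := M ⧸ P)
  have hspan : span R (P.mkQ '' s) = ⊤ := by rw [← map_span, hs, map_top, range_mkQ]
  obtain ⟨T, hTs, huT⟩ := subset_span_finite_of_subset_span
    (hspan ▸ Set.subset_univ _ : (u : Set (M ⧸ P)) ⊆ span R (P.mkQ '' s))
  obtain ⟨t, hts, rfl⟩ := Finset.subset_set_image_iff.mp hTs
  refine ⟨t, hts, ?_⟩
  rw [sup_comm, ← map_mkQ_eq_top, map_span, _root_.eq_top_iff, ← hu, span_le]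
  simpa using huT

end Submodule

section GradedModule

variable {A M σA σM : Type*} [Semiring A] [AddCommMonoid M] [Module A M]
  [SetLike σA A] [SetLike σM M] [AddSubmonoidClass σM M] (ℳ : ℕ → σM) [Decomposition ℳ]

theorem Submodule.span_setOf_isHomogeneousElem_eq_top :
    span A {x : M | SetLike.IsHomogeneousElem ℳ x} = ⊤ := by
  refine eq_top_iff'.mpr fun x => ?_
  induction x using Decomposition.inductionOn ℳ with
  | zero => exact zero_mem _
  | homogeneous m => exact subset_span ⟨_, m.2⟩
  | add x y hx hy => exact add_mem hx hy

theorem DirectSum.coe_decompose_smul_of_mem {𝒜 : ℕ → σA} [SetLike.GradedSMul 𝒜 ℳ] {i : ℕ} {a : A}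
    (ha : a ∈ 𝒜 i) (x : M) (n : ℕ) :
    (decompose ℳ (a • x) n : M) = if i ≤ n then a • (decompose ℳ x (n - i) : M) else 0 := by
  induction x using Decomposition.inductionOn ℳ with
  | zero => simp
  | @homogeneous j m =>
    have ham : a • (m : M) ∈ ℳ (i + j) := SetLike.GradedSMul.smul_mem ha m.2
    by_cases hn : i + j = n
    · subst hn
      rw [decompose_of_mem_same ℳ ham, if_pos (Nat.le_add_right i j), Nat.add_sub_cancel_left,
        decompose_coe, of_eq_same]
    · rw [decompose_of_mem_ne ℳ ham hn]
      split_ifs with hin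
      · rw [decompose_coe, of_eq_of_ne _ _ _ (by omega), ZeroMemClass.coe_zero, smul_zero]
      · rfl
  | add x y hx hy =>
    simp only [smul_add, decompose_add, DirectSum.add_apply, AddMemClass.coe_add, hx, hy]
    split_ifs <;> simp

theorem DirectSum.decompose_smul_mem (𝒜 : ℕ → σA) [AddSubmonoidClass σA A] [GradedRing 𝒜]
    [SetLike.GradedSMul 𝒜 ℳ] {N : Submodule A M} {x : M} (hx : ∀ j, (decompose ℳ x j : M) ∈ N)
    (a : A) (n : ℕ) : (decompose ℳ (a • x) n : M) ∈ N := by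
  induction a using Decomposition.inductionOn 𝒜 with
  | zero => simp
  | @homogeneous i a =>
    rw [coe_decompose_smul_of_mem ℳ a.2]
    split_ifs
    exacts [N.smul_mem _ (hx _), N.zero_mem]
  | add a b ha hb =>
    rw [add_smul, decompose_add, DirectSum.add_apply, AddMemClass.coe_add]
    exact N.add_mem ha hb

theorem Submodule.isHomogeneous_span (𝒜 : ℕ → σA) [AddSubmonoidClass σA A] [GradedRing 𝒜]
    [SetLike.GradedSMul 𝒜 ℳ] {s : Set M} (hs : ∀ x ∈ s, SetLike.IsHomogeneousElem ℳ x) :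
    (span A s).IsHomogeneous ℳ := by
  intro n x hx
  induction hx using span_induction generalizing n with
  | mem x hx =>
    obtain ⟨i, hi⟩ := hs x hx
    rw [decompose_of_mem ℳ hi, coe_of_apply]
    split_ifs
    exacts [subset_span hx, zero_mem _]
  | zero => simp
  | add x y _ _ hx hy =>
    rw [decompose_add, DirectSum.add_apply, AddMemClass.coe_add]
    exact add_mem (hx n) (hy n)
  | smul a x _ hx => exact decompose_smul_mem ℳ 𝒜 hx a n

variable (𝒜 : ℕ → σA) [AddSubmonoidClass σA A] [GradedRing 𝒜] [SetLike.GradedSMul 𝒜 ℳ]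

theorem DirectSum.decompose_mem_of_mem_irrelevant_smul_top {N : Submodule A M} {n : ℕ}
    (hN : ∀ j < n, ∀ m ∈ ℳ j, m ∈ N) {z : M} (hz : z ∈ (𝒜₊).toIdeal • (⊤ : Submodule A M)) :
    (decompose ℳ z n : M) ∈ N := by
  refine Submodule.smul_induction_on hz (fun a ha x _ => ?_) fun y z hy hz => ?_
  · replace ha : a ∈ (𝒜₊).toAddSubmonoid := ha
    rw [irrelevant_eq_closure] at ha
    induction ha using AddSubmonoid.closure_induction with
    | mem a ha =>
      obtain ⟨i, hi, ha⟩ := Set.mem_iUnion₂.mp ha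
      rw [coe_decompose_smul_of_mem ℳ ha]
      split_ifs
      exacts [N.smul_mem _ (hN _ (by omega) _ (SetLike.coe_mem _)), N.zero_mem]
    | zero => simp
    | add a b _ _ ha hb =>
      rw [add_smul, decompose_add, DirectSum.add_apply, AddMemClass.coe_add]
      exact N.add_mem ha hb
  · rw [decompose_add, DirectSum.add_apply, AddMemClass.coe_add]
    exact N.add_mem hy hz

theorem Submodule.IsHomogeneous.eq_top_of_sup_irrelevant_smul_eq_top {N : Submodule A M}
    (hN : N.IsHomogeneous ℳ) (h : N ⊔ (𝒜₊).toIdeal • ⊤ = ⊤) : N = ⊤ := by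
  have hdeg : ∀ n, ∀ m ∈ ℳ n, m ∈ N := by
    intro n
    induction n using Nat.strong_induction_on with
    | _ n ih =>
      intro m hm
      obtain ⟨y, hy, z, hz, rfl⟩ := mem_sup.mp (h.ge (mem_top (x := m)))
      rw [← decompose_of_mem_same ℳ hm, decompose_add, DirectSum.add_apply, AddMemClass.coe_add]
      exact N.add_mem (hN n hy) (decompose_mem_of_mem_irrelevant_smul_top ℳ 𝒜 ih hz)
  exact eq_top_iff'.mpr fun x => (hN.mem_iff ℳ).mpr fun n => hdeg n _ (SetLike.coe_mem _)

end GradedModule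

/-- Graded Nakayama for finite generation: if `A` is an `ℕ`-graded commutative
ring with augmentation ideal `A₊` and `M` is a non-negatively graded `A`-module
whose quotient `M/(A₊·M)` is finitely generated (over `A⁰ = A/A₊`, equivalently
over `A` since `A₊` acts trivially), then `M` is finitely generated over `A`. -/
theorem graded_nakayama_finite {A M : Type*} [CommRing A] [AddCommGroup M] [Module A M]
    (𝒜 : ℕ → AddSubgroup A) (ℳ : ℕ → AddSubgroup M)
    [GradedRing 𝒜] [DirectSum.Decomposition ℳ] [SetLike.GradedSMul 𝒜 ℳ]
    (h : Module.Finite A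
      (M ⧸ ((HomogeneousIdeal.irrelevant 𝒜).toIdeal • (⊤ : Submodule A M)))) :
    Module.Finite A M := by
  obtain ⟨t, hts, ht⟩ := Submodule.exists_finset_subset_span_sup_eq_top
    (P := (HomogeneousIdeal.irrelevant 𝒜).toIdeal • ⊤)
    (Submodule.span_setOf_isHomogeneousElem_eq_top (A := A) ℳ)
  exact ⟨t, (Submodule.isHomogeneous_span ℳ 𝒜 hts).eq_top_of_sup_irrelevant_smul_eq_top ℳ 𝒜 ht⟩
end
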